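/- Let K_η : ℝ → ℝ be defined via Fourier transforms by F[K_η](t) = F[K](t)/F[η](t/λ), where the kernel K satisfies supp F[K] ⊂ [−S,S] and sup_t |F[K](t)| ≤ K₁, and η satisfies |F[η](t)| ≥ c|t|^{−β} for |t| ≥ T and F[η] nonvanishing and continuous. Then there is a constant C > 0 such that for all 0 < λ ≤ 1, sup_s (1/λ²)|F[K_η(·/λ)](s)|² ≤ C λ^{−2β}. -/

import Mathlib

/-!
Rescaling gives `𝓕[K_η(·/λ)](s) = λ 𝓕[K](λs) / 𝓕[η](s)`, so only `|s| ≤ S/λ` matters. By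
continuity and non-vanishing on `[-T, T]` together with the polynomial lower bound outside,
`‖𝓕[η](t)‖ ≥ m · max(T, |t|)^(-β)` for some `m > 0`; on `|s| ≤ S/λ` with `λ ≤ 1` this is at
least `m · max(T, S)^(-β) · λ^β`, which gives the bound with `C = (K₁ max(T, S)^β / m)²`.
-/

open scoped FourierTransform
open Real MeasureTheory

theorem Real.fourier_comp_div {E : Type*} [NormedAddCommGroup E] [NormedSpace ℂ E]
    (f : ℝ → E) {a : ℝ} (ha : a ≠ 0) (w : ℝ) :
    𝓕 (fun x => f (x / a)) w = |a| • 𝓕 f (a * w) := by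
  have hphase : ∀ x : ℝ, x / a * (a * w) = x * w := fun x => by field_simp
  rw [Real.fourier_real_eq, Real.fourier_real_eq,
    ← Measure.integral_comp_div (fun y => 𝐞 (-(y * (a * w))) • f y) a]
  simp only [hphase]

theorem Real.one_div_sq_mul_norm_fourier_comp_div_sq (f : ℝ → ℂ) {a : ℝ} (ha : 0 < a) (w : ℝ) :
    (1 / a ^ 2) * ‖𝓕 (fun x => f (x / a)) w‖ ^ 2 = ‖𝓕 f (a * w)‖ ^ 2 := by
  rw [Real.fourier_comp_div f ha.ne', abs_of_pos ha, norm_smul, norm_of_nonneg ha.le]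
  field_simp

theorem exists_mul_max_rpow_neg_le_norm {E : Type*} [NormedAddCommGroup E] {f : ℝ → E}
    {c T β : ℝ} (hc : 0 < c) (hT : 0 < T) (hf : Continuous f) (hf0 : ∀ t, f t ≠ 0)
    (hlow : ∀ t, T ≤ |t| → c * |t| ^ (-β) ≤ ‖f t‖) :
    ∃ m > 0, ∀ t, m * max T |t| ^ (-β) ≤ ‖f t‖ := by
  obtain ⟨t₀, -, ht₀⟩ := isCompact_Icc.exists_isMinOn (Set.nonempty_Icc.2 (neg_le_self hT.le))
    (hf.norm.continuousOn (s := Set.Icc (-T) T))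
  have hm₀ : 0 < ‖f t₀‖ := norm_pos_iff.2 (hf0 t₀)
  refine ⟨min c (‖f t₀‖ * T ^ β), lt_min hc (by positivity), fun t => ?_⟩
  rcases le_total |t| T with ht | ht
  · calc min c (‖f t₀‖ * T ^ β) * max T |t| ^ (-β)
          ≤ ‖f t₀‖ * T ^ β * T ^ (-β) := by
            rw [max_eq_left ht]; gcongr; exact min_le_right _ _
      _ = ‖f t₀‖ := by rw [mul_assoc, ← rpow_add hT, add_neg_cancel, rpow_zero, mul_one]
      _ ≤ ‖f t‖ := ht₀ (abs_le.1 ht)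
  · calc min c (‖f t₀‖ * T ^ β) * max T |t| ^ (-β) ≤ c * |t| ^ (-β) := by
          rw [max_eq_right ht]; gcongr; exact min_le_left _ _
      _ ≤ ‖f t‖ := hlow t ht

theorem rpow_mul_rpow_neg_le_max_rpow_neg {T R β lam s : ℝ} (hT : 0 < T) (hTR : T ≤ R)
    (hβ : 0 ≤ β) (hlam : 0 < lam) (hlam1 : lam ≤ 1) (hs : |lam * s| ≤ R) :
    R ^ (-β) * lam ^ β ≤ max T |s| ^ (-β) := by
  have hmax : max T |s| ≤ R / lam := by
    rw [le_div_iff₀ hlam, max_mul_of_nonneg _ _ hlam.le]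
    refine max_le ((mul_le_of_le_one_right hT.le hlam1).trans hTR) ?_
    rwa [abs_mul, abs_of_pos hlam, mul_comm] at hs
  calc R ^ (-β) * lam ^ β = (R / lam) ^ (-β) := by
        rw [div_rpow (hT.trans_le hTR).le hlam.le, rpow_neg hlam.le, div_inv_eq_mul]
    _ ≤ max T |s| ^ (-β) :=
        rpow_le_rpow_of_nonpos (lt_max_of_lt_left hT) hmax (neg_nonpos.2 hβ)

theorem deconvolution_kernel_fourier_bound_general
    (Kker η : ℝ → ℂ) (S K₁ c T β : ℝ)
    (hK₁ : 0 < K₁) (hc : 0 < c) (hT : 0 < T) (hβ : 0 < β)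
    (hsupp : ∀ t : ℝ, S < |t| → 𝓕 Kker t = 0)
    (hKbound : ∀ t : ℝ, ‖𝓕 Kker t‖ ≤ K₁)
    (hη_lower : ∀ t : ℝ, T ≤ |t| → c * |t| ^ (-β) ≤ ‖𝓕 η t‖)
    (hη_ne : ∀ t : ℝ, 𝓕 η t ≠ 0)
    (hη_cont : Continuous fun t => 𝓕 η t) :
    ∃ C > 0, ∀ lam : ℝ, 0 < lam → lam ≤ 1 →
      ∀ Kη : ℝ → ℂ, (∀ t : ℝ, 𝓕 Kη t = 𝓕 Kker t / 𝓕 η (t / lam)) →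
        ∀ s : ℝ, (1 / lam ^ 2) * ‖𝓕 (fun x => Kη (x / lam)) s‖ ^ 2 ≤
          C * lam ^ (-(2 * β)) := by
  obtain ⟨m, hm, hηm⟩ := exists_mul_max_rpow_neg_le_norm hc hT hη_cont hη_ne hη_lower
  set R := max T S
  refine ⟨(K₁ / (m * R ^ (-β))) ^ 2, by positivity, fun lam hlam hlam1 Kη hKη s => ?_⟩
  rw [Real.one_div_sq_mul_norm_fourier_comp_div_sq Kη hlam, hKη, mul_div_cancel_left₀ s hlam.ne']
  rcases le_or_gt |lam * s| S with hs | hs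
  · have hden : m * R ^ (-β) * lam ^ β ≤ ‖𝓕 η s‖ := calc
        m * R ^ (-β) * lam ^ β ≤ m * max T |s| ^ (-β) := by
          rw [mul_assoc]
          exact mul_le_mul_of_nonneg_left (rpow_mul_rpow_neg_le_max_rpow_neg hT (le_max_left T S)
            hβ.le hlam hlam1 (hs.trans (le_max_right T S))) hm.le
      _ ≤ ‖𝓕 η s‖ := hηm s
    calc ‖𝓕 Kker (lam * s) / 𝓕 η s‖ ^ 2 ≤ (K₁ / (m * R ^ (-β) * lam ^ β)) ^ 2 := by
          rw [norm_div]
          gcongr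
          exact hKbound _
      _ = (K₁ / (m * R ^ (-β))) ^ 2 * lam ^ (-(2 * β)) := by
          rw [rpow_neg hlam.le, mul_comm 2 β, rpow_mul hlam.le, rpow_two]
          field_simp
  · rw [hsupp _ hs, zero_div, norm_zero, sq, zero_mul]
    positivity

/-- Core Fourier bound of Lemma `lip`: the rescaled deconvolution kernel
`K_η(·/λ)`, defined through `F[K_η](t) = F[K](t)/F[η](t/λ)`, satisfies
`sup_s (1/λ²)|F[K_η(·/λ)](s)|² ≤ C λ^{−2β}`. -/
theorem deconvolution_kernel_fourier_bound
    (Kker η : ℝ → ℂ) (S K₁ c T β : ℝ)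
    (hS : 0 < S) (hK₁ : 0 < K₁) (hc : 0 < c) (hT : 0 < T) (hβ : 0 < β)
    (hsupp : ∀ t : ℝ, S < |t| → 𝓕 Kker t = 0)
    (hKbound : ∀ t : ℝ, ‖𝓕 Kker t‖ ≤ K₁)
    (hη_lower : ∀ t : ℝ, T ≤ |t| → c * |t| ^ (-β) ≤ ‖𝓕 η t‖)
    (hη_ne : ∀ t : ℝ, 𝓕 η t ≠ 0)
    (hη_cont : Continuous fun t => 𝓕 η t) :
    ∃ C > 0, ∀ lam : ℝ, 0 < lam → lam ≤ 1 →
      ∀ Kη : ℝ → ℂ, (∀ t : ℝ, 𝓕 Kη t = 𝓕 Kker t / 𝓕 η (t / lam)) →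
        ∀ s : ℝ, (1 / lam ^ 2) * ‖𝓕 (fun x => Kη (x / lam)) s‖ ^ 2 ≤
          C * lam ^ (-(2 * β)) :=
  deconvolution_kernel_fourier_bound_general Kker η S K₁ c T β hK₁ hc hT hβ hsupp hKbound hη_lower
    hη_ne hη_cont
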